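/- For all integers h, ℓ, q with 3 < h < ℓ−3 and q ≥ ℓh/4 + h + 1, Cops has a winning strategy in the q-round (h+1)-cops-and-robber game CR^{h+1}_q(G_{h×ℓ}) on the h×ℓ grid. -/

import Mathlib

set_option maxHeartbeats 1000000

/-! ## Bundled finite simple graphs and homomorphism counting -/

/-- A bundled finite simple graph (vertex set `Fin n`). -/
abbrev GraphB : Type := Σ n : ℕ, SimpleGraph (Fin n)

/-- The number of graph homomorphisms from `F` to `G`. -/
noncomputable def homCount {V W : Type*} (F : SimpleGraph V) (G : SimpleGraph W) : ℕ :=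
  Set.ncard {f : V → W | ∀ ⦃u v⦄, F.Adj u v → G.Adj (f u) (f v)}

/-- `G` and `H` are homomorphism indistinguishable over the class `𝓕`. -/
def HomIndist (𝓕 : Set GraphB) {V W : Type*} (G : SimpleGraph V) (H : SimpleGraph W) : Prop :=
  ∀ A ∈ 𝓕, homCount A.2 G = homCount A.2 H

/-- The homomorphism distinguishing closure of the class `𝓕`. -/
def hdCl (𝓕 : Set GraphB) : Set GraphB :=
  {A | ∀ G H : GraphB, HomIndist 𝓕 G.2 H.2 → homCount A.2 G.2 = homCount A.2 H.2}

/-! ## Pebble forest covers and the class `T^k_q` -/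

/-- A `k`-pebble forest cover of depth at most `q`.  The rooted forest is encoded by its
ancestor (partial) order `le`, in which the set of ancestors of any vertex is a chain. -/
structure PebbleForestCover {V : Type*} (G : SimpleGraph V) (k q : ℕ) where
  le : V → V → Prop
  le_refl : ∀ v, le v v
  le_antisymm : ∀ u v, le u v → le v u → u = v
  le_trans : ∀ u v w, le u v → le v w → le u w
  downChain : ∀ u v w, le u w → le v w → le u v ∨ le v u
  peb : V → Fin k
  cover : ∀ ⦃u v⦄, G.Adj u v → le u v ∨ le v u
  pebbleCond : ∀ ⦃u v w⦄, G.Adj u v → le u v → le u w → le w v → u ≠ w → peb u ≠ peb w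
  heightLE : ∀ v, Set.ncard {u | le u v} ≤ q

def HasPFC {V : Type*} (G : SimpleGraph V) (k q : ℕ) : Prop :=
  Nonempty (PebbleForestCover G k q)

/-- The class `T^k_q` of graphs admitting a `k`-pebble forest cover of depth at most `q`. -/
def Tclass (k q : ℕ) : Set GraphB := {G | HasPFC G.2 k q}

/-! ## Forest covers, treedepth, tree decompositions, treewidth -/

/-- `G` has a forest cover of height at most `q`, i.e. treedepth at most `q`. -/
def HasForestCover {V : Type*} (G : SimpleGraph V) (q : ℕ) : Prop :=
  ∃ le : V → V → Prop,
    (∀ v, le v v) ∧ (∀ u v, le u v → le v u → u = v) ∧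
    (∀ u v w, le u v → le v w → le u w) ∧
    (∀ u v w, le u w → le v w → le u v ∨ le v u) ∧
    (∀ ⦃u v⦄, G.Adj u v → le u v ∨ le v u) ∧
    (∀ v, Set.ncard {u | le u v} ≤ q)

/-- The class `TD_q` of graphs of treedepth at most `q`. -/
def TDclass (q : ℕ) : Set GraphB := {G | HasForestCover G.2 q}

/-- A tree decomposition of `G`. -/
structure TreeDecomp {V : Type*} (G : SimpleGraph V) where
  n : ℕ
  T : SimpleGraph (Fin n)
  isTree : T.IsTree
  bag : Fin n → Set V
  coversVerts : ∀ v : V, ∃ t, v ∈ bag t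
  coversEdges : ∀ ⦃u v⦄, G.Adj u v → ∃ t, u ∈ bag t ∧ v ∈ bag t
  bagsConnected : ∀ v : V, (SimpleGraph.induce {t | v ∈ bag t} T).Connected

/-- The decomposition has width at most `w`. -/
def TreeDecomp.widthLE {V : Type*} {G : SimpleGraph V} (d : TreeDecomp G) (w : ℕ) : Prop :=
  ∀ t, (d.bag t).ncard ≤ w + 1

/-- `t` lies on the (unique) path from `r` to `s` in the tree `d.T`,
i.e. `t` is an ancestor of `s` when `d.T` is rooted at `r`. -/
def TreeDecomp.anc {V : Type*} {G : SimpleGraph V} (d : TreeDecomp G) (r t s : Fin d.n) : Prop :=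
  ∀ w : d.T.Walk r s, t ∈ w.support

/-- The decomposition has depth at most `q`: for some root `r`, for every node `s`,
the union of the bags of ancestors of `s` has at most `q` vertices. -/
def TreeDecomp.depthLE {V : Type*} {G : SimpleGraph V} (d : TreeDecomp G) (q : ℕ) : Prop :=
  ∃ r : Fin d.n, ∀ s : Fin d.n, (⋃ t ∈ {t | d.anc r t s}, d.bag t).ncard ≤ q

/-- The class `TW_w` of graphs of treewidth at most `w`. -/
def TWclass (w : ℕ) : Set GraphB := {G | ∃ d : TreeDecomp G.2, d.widthLE w}

/-! ## Minors and disjoint unions -/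

/-- `H` is a minor of `G`: there are pairwise disjoint connected nonempty branch sets in `G`,
one for each vertex of `H`, such that edges of `H` are realised between branch sets. -/
def IsMinor {W V : Type*} (H : SimpleGraph W) (G : SimpleGraph V) : Prop :=
  ∃ φ : V → Option W,
    (∀ w : W, (SimpleGraph.induce {v | φ v = some w} G).Connected) ∧
    (∀ ⦃w₁ w₂⦄, H.Adj w₁ w₂ → ∃ v₁ v₂, φ v₁ = some w₁ ∧ φ v₂ = some w₂ ∧ G.Adj v₁ v₂)

/-- The disjoint union of two simple graphs. -/
def sumGraph {V W : Type*} (G : SimpleGraph V) (H : SimpleGraph W) : SimpleGraph (V ⊕ W) where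
  Adj x y :=
    match x, y with
    | Sum.inl a, Sum.inl b => G.Adj a b
    | Sum.inr a, Sum.inr b => H.Adj a b
    | _, _ => False
  symm := by
    constructor
    rintro (a | a) (b | b) h
    · exact G.adj_symm h
    · exact h.elim
    · exact h.elim
    · exact H.adj_symm h
  loopless := by
    constructor
    rintro (a | a) h
    · exact G.loopless.irrefl a h
    · exact H.loopless.irrefl a h

/-! ## Cops-and-robber games -/

/-- A robber move from `v` to `u`: a walk in `G` none of whose vertices lies in `A`
(`A` will be `X ∩ Y` for old/new cop positions `X`, `Y` on `G` plus a `k`-clique). -/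
def RobberMove {V : Type*} {k : ℕ} (G : SimpleGraph V) (A : Finset (V ⊕ Fin k)) (v u : V) :
    Prop :=
  ∃ w : G.Walk v u, ∀ x ∈ w.support, Sum.inl x ∉ A

/-- The initial cop position: all `k` cops on the auxiliary clique. -/
def initPos (V : Type*) [DecidableEq V] (k : ℕ) : Finset (V ⊕ Fin k) :=
  Finset.univ.image Sum.inr

/-- In the (non-monotone) cops-and-robber game on `G` with `k` cops, from cop position `X`
and robber position `v`, Cops can catch the robber within `q` further rounds. -/
def CopsCatch {V : Type*} [DecidableEq V] (G : SimpleGraph V) (k : ℕ) :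
    ℕ → Finset (V ⊕ Fin k) → V → Prop
  | 0, _, _ => False
  | q + 1, X, v =>
      ∃ Y : Finset (V ⊕ Fin k), Y.card = k ∧ (X ∩ Y).card = k - 1 ∧
        ∀ u : V, RobberMove G (X ∩ Y) v u → (Sum.inl u ∈ Y ∨ CopsCatch G k q Y u)

/-- Monotone variant: Cops may only move so that the robber escape space does not grow. -/
def MonCopsCatch {V : Type*} [DecidableEq V] (G : SimpleGraph V) (k : ℕ) :
    ℕ → Finset (V ⊕ Fin k) → V → Prop
  | 0, _, _ => False
  | q + 1, X, v =>
      ∃ Y : Finset (V ⊕ Fin k), Y.card = k ∧ (X ∩ Y).card = k - 1 ∧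
        (∀ u : V, RobberMove G (X ∩ Y) v u → RobberMove G X v u) ∧
        ∀ u : V, RobberMove G (X ∩ Y) v u → (Sum.inl u ∈ Y ∨ MonCopsCatch G k q Y u)

/-- Robber can evade capture for `q` further rounds from cop position `X`, robber at `v`. -/
def RobberEsc {V : Type*} [DecidableEq V] (G : SimpleGraph V) (k : ℕ) :
    ℕ → Finset (V ⊕ Fin k) → V → Prop
  | 0, _, _ => True
  | q + 1, X, v =>
      ∀ Y : Finset (V ⊕ Fin k), Y.card = k → (X ∩ Y).card = k - 1 →
        ∃ u : V, RobberMove G (X ∩ Y) v u ∧ Sum.inl u ∉ Y ∧ RobberEsc G k q Y u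

/-- Cops has a winning strategy in the `q`-round `k`-cops-and-robber game on `G`. -/
def CopsWinGame {V : Type*} [DecidableEq V] (G : SimpleGraph V) (k q : ℕ) : Prop :=
  ∀ v : V, CopsCatch G k q (initPos V k) v

/-- Cops has a winning strategy in the monotone `q`-round `k`-cops-and-robber game on `G`. -/
def MonCopsWinGame {V : Type*} [DecidableEq V] (G : SimpleGraph V) (k q : ℕ) : Prop :=
  ∀ v : V, MonCopsCatch G k q (initPos V k) v

/-- Robber has a winning strategy in the `q`-round `k`-cops-and-robber game on `G`. -/
def RobberWinsGame {V : Type*} [DecidableEq V] (G : SimpleGraph V) (k q : ℕ) : Prop :=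
  ∃ v : V, RobberEsc G k q (initPos V k) v

/-- The `h × ℓ` grid graph. -/
def gridGraph (h l : ℕ) : SimpleGraph (Fin h × Fin l) :=
  (SimpleGraph.pathGraph h).boxProd (SimpleGraph.pathGraph l)

/-! ## The CFI-like construction `G_U` -/

/-- Vertices of `G_U`: pairs `(v, S)` with `S` a set of edges incident to `v` whose
parity matches `|{v} ∩ U|`. -/
def CFIvert {V : Type*} (G : SimpleGraph V) (U : Set V) : Type _ :=
  {p : V × Set (Sym2 V) // p.2 ⊆ G.incidenceSet p.1 ∧ (Even p.2.ncard ↔ p.1 ∉ U)}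

/-- The CFI-like graph `G_U` of Roberson. -/
def CFI {V : Type*} (G : SimpleGraph V) (U : Set V) : SimpleGraph (CFIvert G U) where
  Adj x y := G.Adj x.1.1 y.1.1 ∧ s(x.1.1, y.1.1) ∉ symmDiff x.1.2 y.1.2
  symm := by
    constructor
    rintro x y ⟨h1, h2⟩
    refine ⟨h1.symm, ?_⟩
    rw [Sym2.eq_swap, symmDiff_comm]
    exact h2
  loopless := by
    constructor
    rintro x ⟨h1, _⟩
    exact G.loopless.irrefl _ h1

/-! ## Counting first-order logic -/

/-- Formulae of first-order counting logic `C` with variables indexed by `α`. -/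
inductive CForm (α : Type) : Type
  | eq : α → α → CForm α
  | adj : α → α → CForm α
  | not : CForm α → CForm α
  | or : CForm α → CForm α → CForm α
  | and : CForm α → CForm α → CForm α
  | count : ℕ → α → CForm α → CForm α

namespace CForm

variable {α : Type} [DecidableEq α]

/-- Quantifier rank. -/
def qr : CForm α → ℕ
  | eq _ _ => 0
  | adj _ _ => 0
  | not φ => qr φ
  | or φ ψ => max (qr φ) (qr ψ)
  | and φ ψ => max (qr φ) (qr ψ)
  | count _ _ φ => qr φ + 1

/-- Free variables. -/
def freeVars : CForm α → Finset α
  | eq i j => {i, j}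
  | adj i j => {i, j}
  | not φ => freeVars φ
  | or φ ψ => freeVars φ ∪ freeVars ψ
  | and φ ψ => freeVars φ ∪ freeVars ψ
  | count _ i φ => (freeVars φ).erase i

/-- Satisfaction in a simple graph, relative to a partial variable assignment. -/
def Sat {V : Type*} (G : SimpleGraph V) : CForm α → (α → Option V) → Prop
  | eq i j, a => ∃ v, a i = some v ∧ a j = some v
  | adj i j, a => ∃ v w, a i = some v ∧ a j = some w ∧ G.Adj v w
  | not φ, a => ¬ Sat G φ a
  | or φ ψ, a => Sat G φ a ∨ Sat G ψ a
  | and φ ψ, a => Sat G φ a ∧ Sat G ψ a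
  | count t i φ, a =>
      ∃ s : Finset V, t ≤ s.card ∧ ∀ v ∈ s, Sat G φ (fun j => if j = i then some v else a j)

/-- Guarded formulae: every quantifier occurs as `∃^{≥t} y (E x y ∧ ψ)` with `x ≠ y`. -/
def Guarded : CForm α → Prop
  | count _ y (and (adj x y') χ) => y' = y ∧ x ≠ y ∧ Guarded χ
  | count _ _ _ => False
  | eq _ _ => True
  | adj _ _ => True
  | not φ => Guarded φ
  | or φ ψ => Guarded φ ∧ Guarded ψ
  | and φ ψ => Guarded φ ∧ Guarded ψ

end CForm

/-! ## Labelled graphs, products, construction trees -/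

/-- A `k`-labelled finite graph. -/
structure LGraph (k : ℕ) : Type 1 where
  V : Type
  fin : Finite V
  G : SimpleGraph V
  ν : Fin k → Option V

namespace LGraph

variable {k : ℕ}

/-- Number of homomorphisms between `k`-labelled graphs. -/
noncomputable def lhomCount (F G : LGraph k) : ℕ :=
  Set.ncard {f : F.V → G.V |
    (∀ ⦃u v⦄, F.G.Adj u v → G.G.Adj (f u) (f v)) ∧
    ∀ i v, F.ν i = some v → ∃ w, G.ν i = some w ∧ f v = w}

/-- Remove label `i`. -/
def removeLabel (A : LGraph k) (i : Fin k) : LGraph k :=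
  { A with ν := fun j => if j = i then none else A.ν j }

/-- Every vertex carries at least one label. -/
def FullyLabelled (A : LGraph k) : Prop := ∀ v : A.V, ∃ i, A.ν i = some v

/-- Adjacency on the disjoint sum of two labelled graphs. -/
def sumAdj (A B : LGraph k) : A.V ⊕ B.V → A.V ⊕ B.V → Prop
  | Sum.inl u, Sum.inl v => A.G.Adj u v
  | Sum.inr u, Sum.inr v => B.G.Adj u v
  | _, _ => False

lemma sumAdj_symm (A B : LGraph k) : ∀ x y, sumAdj A B x y → sumAdj A B y x := by
  rintro (u | u) (v | v) h
  · exact A.G.adj_symm h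
  · exact h.elim
  · exact h.elim
  · exact B.G.adj_symm h

/-- The gluing relation: vertices carrying the same label get identified. -/
def glue (A B : LGraph k) : A.V ⊕ B.V → A.V ⊕ B.V → Prop := fun x y =>
  ∃ i : Fin k, (A.ν i).map Sum.inl = some x ∧ (B.ν i).map Sum.inr = some y

/-- The product of two `k`-labelled graphs: disjoint union, identify equally labelled
vertices, suppress loops and parallel edges. -/
def product (A B : LGraph k) : LGraph k where
  V := Quot (glue A B)
  fin := by
    haveI := A.fin
    haveI := B.fin
    exact Finite.of_surjective (Quot.mk _) (fun x => Quot.inductionOn x fun a => ⟨a, rfl⟩)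
  G :=
    { Adj := fun x y =>
        x ≠ y ∧ ∃ u v, Quot.mk _ u = x ∧ Quot.mk _ v = y ∧ sumAdj A B u v
      symm := by
        constructor
        rintro x y ⟨hne, u, v, hu, hv, h⟩
        exact ⟨hne.symm, v, u, hv, hu, sumAdj_symm A B u v h⟩
      loopless := ⟨fun x h => h.1 rfl⟩ }
  ν := fun i =>
    ((A.ν i).map fun v => Quot.mk _ (Sum.inl v)).orElse
      fun _ => (B.ν i).map fun v => Quot.mk _ (Sum.inr v)

/-- Isomorphism of labelled graphs. -/
def LIso (A B : LGraph k) : Prop :=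
  ∃ e : A.G ≃g B.G, ∀ i, (A.ν i).map (fun v => e v) = B.ν i

end LGraph

/-- `k`-construction trees: leaves carry (fully labelled) graphs, unary nodes remove
one label, binary nodes take products. -/
inductive CT (k : ℕ) : Type 1
  | leaf : LGraph k → CT k
  | elim : Fin k → CT k → CT k
  | prod : CT k → CT k → CT k

namespace CT

variable {k : ℕ}

/-- The labelled graph constructed by a construction tree. -/
def graphOf : CT k → LGraph k
  | leaf A => A
  | elim i t => (graphOf t).removeLabel i
  | prod t₁ t₂ => (graphOf t₁).product (graphOf t₂)

/-- Validity: leaves are fully labelled and elimination nodes remove an assigned label. -/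
def Valid : CT k → Prop
  | leaf A => A.FullyLabelled
  | elim i t => Valid t ∧ (graphOf t).ν i ≠ none
  | prod t₁ t₂ => Valid t₁ ∧ Valid t₂

/-- Guarded validity: labels may only be removed from vertices with a labelled neighbour. -/
def GuardedValid : CT k → Prop
  | leaf A => A.FullyLabelled
  | elim i t => GuardedValid t ∧
      ∃ v, (graphOf t).ν i = some v ∧
        ∃ j w, (graphOf t).ν j = some w ∧ (graphOf t).G.Adj v w
  | prod t₁ t₂ => GuardedValid t₁ ∧ GuardedValid t₂

/-- The elimination depth: maximal number of elimination nodes on a root-to-leaf path. -/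
def elimDepth : CT k → ℕ
  | leaf _ => 0
  | elim _ t => elimDepth t + 1
  | prod t₁ t₂ => max (elimDepth t₁) (elimDepth t₂)

end CT

/-- The class `L^k_q` of `k`-labelled graphs admitting a `k`-construction tree of
elimination depth at most `q`. -/
def Lclass (k q : ℕ) : Set (LGraph k) :=
  {F | ∃ t : CT k, CT.Valid t ∧ CT.elimDepth t ≤ q ∧ LGraph.LIso (CT.graphOf t) F}

/-- The class `GL^k_q`: as `L^k_q`, but labels may only be removed from vertices with a
labelled neighbour. -/
def GLclass (k q : ℕ) : Set (LGraph k) :=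
  {F | ∃ t : CT k, CT.GuardedValid t ∧ CT.elimDepth t ≤ q ∧ LGraph.LIso (CT.graphOf t) F}

/-- The class `GE^k_q` of unlabelled graphs underlying graphs in `GL^k_q`. -/
def GEclass (k q : ℕ) : Set GraphB :=
  {G | ∃ F ∈ GLclass k q, Nonempty (F.G ≃g G.2)}

/-! ## The bijective pebble game -/

/-- `γ` is a partial isomorphism between `G` and `H`. -/
def PartialIso {V W : Type*} (G : SimpleGraph V) (H : SimpleGraph W) {k : ℕ}
    (γ : Fin k → Option (V × W)) : Prop :=
  ∀ i j vi wi vj wj, γ i = some (vi, wi) → γ j = some (vj, wj) →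
    ((vi = vj ↔ wi = wj) ∧ (G.Adj vi vj ↔ H.Adj wi wj))

/-- Duplicator wins the `q`-round bijective `k`-pebble game on `G` and `H` from position `γ`. -/
def DupWins {V W : Type*} (G : SimpleGraph V) (H : SimpleGraph W) (k : ℕ) :
    ℕ → (Fin k → Option (V × W)) → Prop
  | 0, γ => PartialIso G H γ
  | q + 1, γ => PartialIso G H γ ∧
      ∀ p : Fin k, ∃ f : V ≃ W, ∀ v : V,
        DupWins G H k q (fun j => if j = p then some (v, f v) else γ j)


/-!
Cops first deploy `h` of their `h + 1` cops, one per round, on the zigzag `(r, m + r mod 2)`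
around the middle column `m = (ℓ - 2) / 2`. Consecutive rows of a zigzag differ by exactly one
column, so the robber can never cross it. The spare cop then sweeps the zigzag towards the
robber: it takes the cell two columns ahead of a zigzag cop in a row of parity `P`, whose old
cell is no longer needed and becomes the new spare. After about `h / 2` such rounds the zigzag
has advanced by one column, so sweeping half of the grid takes about `ℓ h / 4` rounds. A robber
who slips into the pocket left behind by such a move, or who is pushed to the last column, is
surrounded and caught in the next round.
-/

section Game

variable {V : Type*} {G : SimpleGraph V} {k : ℕ}

lemma RobberMove.eq_of_forall_adj_mem {A : Finset (V ⊕ Fin k)} {v u : V}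
    (hmove : RobberMove G A v u) (hnbr : ∀ x, G.Adj v x → Sum.inl x ∈ A) : u = v := by
  obtain ⟨w, hw⟩ := hmove
  cases w with
  | nil => rfl
  | cons hadj p => exact absurd (hnbr _ hadj) (hw _ (by simp))

lemma RobberMove.map {V' : Type*} {G' : SimpleGraph V'} (f : G →g G')
    {A : Finset (V ⊕ Fin k)} {A' : Finset (V' ⊕ Fin k)}
    (hA : ∀ x, Sum.inl (f x) ∈ A' → Sum.inl x ∈ A) {v u : V} (hmove : RobberMove G A v u) :
    RobberMove G' A' (f v) (f u) := by
  obtain ⟨w, hw⟩ := hmove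
  refine ⟨w.map f, fun x hx hxA => ?_⟩
  obtain ⟨y, hy, rfl⟩ := List.mem_map.1 (SimpleGraph.Walk.support_map f w ▸ hx)
  exact hw y hy (hA y hxA)

lemma Finset.card_insert_erase_of_mem_of_notMem {α : Type*} [DecidableEq α] {s : Finset α}
    {a b : α} (ha : a ∈ s) (hb : b ∉ s) : (insert b (s.erase a)).card = s.card := by
  rw [Finset.card_insert_of_notMem (fun h => hb (Finset.mem_of_mem_erase h)),
    Finset.card_erase_add_one ha]

variable [DecidableEq V]

lemma copsCatch_succ_of_move {q : ℕ} {X : Finset (V ⊕ Fin k)} {v : V} {a b : V ⊕ Fin k}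
    (hX : X.card = k) (ha : a ∈ X) (hb : b ∉ X)
    (hnext : ∀ u, RobberMove G (X.erase a) v u → Sum.inl u ∉ insert b (X.erase a) →
      CopsCatch G k q (insert b (X.erase a)) u) :
    CopsCatch G k (q + 1) X v := by
  have hinter : X ∩ insert b (X.erase a) = X.erase a := by
    rw [Finset.inter_insert_of_notMem hb, Finset.inter_eq_right.2 (Finset.erase_subset a X)]
  refine ⟨insert b (X.erase a), by rw [Finset.card_insert_erase_of_mem_of_notMem ha hb, hX],
    by rw [hinter, Finset.card_erase_of_mem ha, hX], fun u hu => ?_⟩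
  rw [hinter] at hu
  exact or_iff_not_imp_left.2 (hnext u hu)

lemma copsCatch_succ_of_forall_adj_mem {q : ℕ} {X : Finset (V ⊕ Fin k)} {v : V}
    {z : V ⊕ Fin k} (hX : X.card = k) (hz : z ∈ X) (hv : Sum.inl v ∉ X)
    (hnbr : ∀ x, G.Adj v x → Sum.inl x ∈ X.erase z) : CopsCatch G k (q + 1) X v :=
  copsCatch_succ_of_move hX hz hv fun _ hu hnot =>
    (hnot (hu.eq_of_forall_adj_mem hnbr ▸ Finset.mem_insert_self _ _)).elim

lemma CopsCatch.map {V' : Type*} [DecidableEq V'] {G' : SimpleGraph V'} (φ : G ≃g G') :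
    ∀ {q : ℕ} {X : Finset (V ⊕ Fin k)} {v : V}, CopsCatch G k q X v →
      CopsCatch G' k q (X.map (φ.toEquiv.sumCongr (Equiv.refl (Fin k))).toEmbedding) (φ v)
  | 0, _, _, hcatch => hcatch.elim
  | q + 1, X, v, ⟨Y, hY, hXY, hnext⟩ => by
    set τ := (φ.toEquiv.sumCongr (Equiv.refl (Fin k))).toEmbedding
    have hτ : ∀ x, τ (Sum.inl (φ.symm x)) = Sum.inl x := by simp [τ]
    refine ⟨Y.map τ, by rw [Finset.card_map, hY],
      by rw [← Finset.map_inter, Finset.card_map, hXY], fun u hu => ?_⟩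
    have hu' : RobberMove G (X ∩ Y) v (φ.symm u) := by
      simpa using hu.map φ.symm.toHom fun x hx => by
        rw [← Finset.map_inter, ← hτ]; exact Finset.mem_map_of_mem τ hx
    rcases hnext _ hu' with hmem | hcatch
    · exact Or.inl (hτ u ▸ Finset.mem_map_of_mem τ hmem)
    · exact Or.inr (by simpa using CopsCatch.map φ hcatch)

end Game

section Grid

variable {h l : ℕ}

lemma gridGraph_adj {a b : Fin h × Fin l} : (gridGraph h l).Adj a b ↔
    ((a.1 : ℕ) = b.1 ∧ ((a.2 : ℕ) + 1 = b.2 ∨ (b.2 : ℕ) + 1 = a.2)) ∨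
    ((a.2 : ℕ) = b.2 ∧ ((a.1 : ℕ) + 1 = b.1 ∨ (b.1 : ℕ) + 1 = a.1)) := by
  simp only [gridGraph, SimpleGraph.boxProd_adj, SimpleGraph.pathGraph_adj, Fin.ext_iff]
  tauto

def barrier (h l k : ℕ) (g : ℕ → ℕ) : Finset ((Fin h × Fin l) ⊕ Fin k) :=
  (Finset.univ.filter fun p : Fin h × Fin l => (p.2 : ℕ) = g p.1).image Sum.inl

variable {k : ℕ} {g : ℕ → ℕ}

@[simp]
lemma inl_mem_barrier {p : Fin h × Fin l} :
    (Sum.inl p : (Fin h × Fin l) ⊕ Fin k) ∈ barrier h l k g ↔ (p.2 : ℕ) = g p.1 := by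
  simp [barrier]

@[simp]
lemma inr_notMem_barrier {j : Fin k} : (Sum.inr j : (Fin h × Fin l) ⊕ Fin k) ∉ barrier h l k g := by
  simp [barrier]

lemma barrier_congr {g' : ℕ → ℕ} (hg : ∀ r < h, g r = g' r) :
    barrier h l k g = barrier h l k g' := by
  ext (p | j)
  · simp [hg _ p.1.isLt]
  · simp

lemma card_barrier (hg : ∀ r < h, g r < l) : (barrier h l k g).card = h := by
  rw [barrier, Finset.card_image_of_injective _ Sum.inl_injective]
  calc _ = (Finset.univ : Finset (Fin h)).card := by
        refine Finset.card_bij (fun p _ => p.1) (by simp) (fun p hp p' hp' hpp' => ?_)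
          fun r _ => ⟨(r, ⟨g r, hg r r.isLt⟩), by simp⟩
        simp only [Finset.mem_filter, Finset.mem_univ, true_and] at hp hp'
        exact Prod.ext hpp' (Fin.ext (by rw [hp, hp', hpp']))
    _ = h := by simp

lemma lt_iff_lt_of_adj_of_zigzag
    (hg : ∀ r, r + 1 < h → g (r + 1) = g r + 1 ∨ g r = g (r + 1) + 1)
    {a b : Fin h × Fin l} (hadj : (gridGraph h l).Adj a b) (ha : (a.2 : ℕ) ≠ g a.1)
    (hb : (b.2 : ℕ) ≠ g b.1) : g a.1 < a.2 ↔ g b.1 < b.2 := by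
  rcases gridGraph_adj.1 hadj with ⟨h1, h2⟩ | ⟨h2, h1 | h1⟩
  · rw [h1] at ha ⊢
    omega
  · have := hg a.1 (h1 ▸ b.1.isLt)
    rw [h1] at this
    omega
  · have := hg b.1 (h1 ▸ a.1.isLt)
    rw [h1] at this
    omega

lemma RobberMove.lt_iff_lt_of_zigzag
    (hg : ∀ r, r + 1 < h → g (r + 1) = g r + 1 ∨ g r = g (r + 1) + 1)
    {A : Finset ((Fin h × Fin l) ⊕ Fin k)} (hA : barrier h l k g ⊆ A) {v u : Fin h × Fin l}
    (hmove : RobberMove (gridGraph h l) A v u) : g v.1 < v.2 ↔ g u.1 < u.2 := by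
  obtain ⟨w, hw⟩ := hmove
  have hoff : ∀ x ∈ w.support, (x.2 : ℕ) ≠ g x.1 := fun x hx hxg =>
    hw x hx (hA (inl_mem_barrier.2 hxg))
  clear hw
  induction w with
  | nil => rfl
  | cons hadj p ih =>
    exact (lt_iff_lt_of_adj_of_zigzag hg hadj (hoff _ (by simp)) (hoff _ (by simp))).trans
      (ih fun x hx => hoff x (by simp [hx]))

def gridMirror (h l : ℕ) : gridGraph h l ≃g gridGraph h l where
  toEquiv := Equiv.prodCongr (Equiv.refl (Fin h)) Fin.revPerm
  map_rel_iff' := by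
    intro a b
    simp only [gridGraph_adj, Equiv.prodCongr_apply, Equiv.coe_refl, Prod.map_fst,
      Prod.map_snd, id_eq, Fin.revPerm_apply, Fin.val_rev]
    omega

@[simp]
lemma gridMirror_gridMirror (v : Fin h × Fin l) : gridMirror h l (gridMirror h l v) = v :=
  Prod.ext rfl (Fin.rev_rev _)

lemma barrier_map_gridMirror {g' : ℕ → ℕ} (hg : ∀ r < h, g r + g' r + 1 = l) :
    (barrier h l k g).map ((gridMirror h l).toEquiv.sumCongr (Equiv.refl (Fin k))).toEmbedding =
      barrier h l k g' := by
  ext (p | j)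
  · rw [Finset.mem_map]
    constructor
    · rintro ⟨(p' | j), hp', hpp'⟩ <;> simp [gridMirror] at hp' hpp'
      subst hpp'
      have := hg p'.1 p'.1.isLt
      simp
      omega
    · intro hp
      have := hg p.1 p.1.isLt
      refine ⟨Sum.inl (p.1, p.2.rev), ?_, by simp [gridMirror]⟩
      simp at hp ⊢
      omega
  · simp

end Grid

section Sweep

/-- The zigzag after the first `i` cops in rows of parity `P` have advanced from column `m` to
`m + 2`. -/
def sweepFront (m P i r : ℕ) : ℕ :=
  if r % 2 = P then if r < P + 2 * i then m + 2 else m else m + 1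

def rowCount (h P : ℕ) : ℕ := (h - P + 1) / 2

def sweepRounds (h : ℕ) : ℕ → ℕ → ℕ
  | 0, _ => 0
  | N + 1, P => rowCount h P + sweepRounds h N (1 - P)

variable {h l m P i : ℕ}

lemma sweepFront_zigzag (hP : P ≤ 1) (r : ℕ) :
    sweepFront m P i (r + 1) = sweepFront m P i r + 1 ∨
      sweepFront m P i r = sweepFront m P i (r + 1) + 1 := by
  unfold sweepFront; split_ifs <;> omega

lemma sweepFront_le (r : ℕ) : sweepFront m P i r ≤ m + 2 := by
  unfold sweepFront; split_ifs <;> omega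

lemma sweepFront_of_mod_ne {r : ℕ} (hr : r % 2 ≠ P) : sweepFront m P i r = m + 1 := by
  simp [sweepFront, hr]

lemma sweepFront_rowCount (hP : P ≤ 1) :
    ∀ r < h, sweepFront m P (rowCount h P) r = sweepFront (m + 1) (1 - P) 0 r := by
  intro r hr
  unfold sweepFront rowCount; split_ifs <;> omega

lemma rowCount_le_sweepRounds {N : ℕ} (hN : 1 ≤ N) : rowCount h P ≤ sweepRounds h N P := by
  obtain ⟨N, rfl⟩ := Nat.exists_eq_add_of_le' hN
  exact Nat.le_add_right _ _

lemma sweepRounds_add_two (hP : P ≤ 1) (N : ℕ) :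
    sweepRounds h (N + 2) P = h + sweepRounds h N P := by
  simp only [sweepRounds, rowCount, show 1 - (1 - P) = P by omega]
  omega

lemma two_mul_sweepRounds_le (hP : P ≤ 1) (N : ℕ) : 2 * sweepRounds h N P ≤ N * h + 1 := by
  induction N using Nat.twoStepInduction with
  | zero => simp [sweepRounds]
  | one => simp only [sweepRounds, rowCount]; omega
  | more N ih _ => rw [sweepRounds_add_two hP, add_mul]; omega

variable {k : ℕ}

lemma mem_barrier_sweepFront_of_adj {v x : Fin h × Fin l}
    (hv : (v.1 : ℕ) % 2 = P) (hgv : sweepFront m P i v.1 = m) (hv2 : (v.2 : ℕ) = m + 1)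
    (hadj : (gridGraph h l).Adj v x) :
    (Sum.inl x : (Fin h × Fin l) ⊕ Fin k) ∈ barrier h l k (sweepFront m P i) ∨
      x.1 = v.1 ∧ (x.2 : ℕ) = m + 2 := by
  rcases gridGraph_adj.1 hadj with ⟨h1, h2 | h2⟩ | ⟨h2, h1 | h1⟩
  · exact Or.inr ⟨Fin.ext h1.symm, by omega⟩
  · left
    rw [inl_mem_barrier, ← h1, hgv]
    omega
  all_goals
    left
    rw [inl_mem_barrier, sweepFront_of_mod_ne (by omega)]
    omega

lemma notMem_barrier_of_forall_lt {g : ℕ → ℕ} {e : (Fin h × Fin l) ⊕ Fin k}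
    (he : ∀ p, e = Sum.inl p → (p.2 : ℕ) < g p.1) : e ∉ barrier h l k g := by
  rcases e with p | j
  · have := he p rfl
    simp only [inl_mem_barrier]
    omega
  · exact inr_notMem_barrier

lemma card_barrier_sweepFront (hm : m + 3 ≤ l) :
    (barrier h l k (sweepFront m P i)).card = h :=
  card_barrier fun r _ => (sweepFront_le r).trans_lt (by omega)

lemma copsCatch_sweep_last (hl : m + 2 = l) {q : ℕ}
    {e : (Fin h × Fin l) ⊕ Fin (h + 1)}
    (he : ∀ p, e = Sum.inl p → (p.2 : ℕ) < sweepFront m P 0 p.1)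
    {v : Fin h × Fin l} (hv : sweepFront m P 0 v.1 < v.2) :
    CopsCatch (gridGraph h l) (h + 1) (q + 1)
      (insert e (barrier h l (h + 1) (sweepFront m P 0))) v := by
  have heB := notMem_barrier_of_forall_lt he
  have hv' : (v.1 : ℕ) % 2 = P ∧ sweepFront m P 0 v.1 = m ∧ (v.2 : ℕ) = m + 1 := by
    have := v.2.isLt
    unfold sweepFront at hv ⊢; split_ifs at hv ⊢ <;> omega
  refine copsCatch_succ_of_forall_adj_mem (z := e) ?_ (Finset.mem_insert_self e _) ?_ ?_
  · rw [Finset.card_insert_of_notMem heB,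
      card_barrier fun r _ => by unfold sweepFront; split_ifs <;> omega]
  · rw [Finset.mem_insert]
    rintro (hve | hvB)
    · have := he v hve.symm
      omega
    · rw [inl_mem_barrier] at hvB
      omega
  · intro x hadj
    rw [Finset.erase_insert heB]
    refine (mem_barrier_sweepFront_of_adj hv'.1 hv'.2.1 hv'.2.2 hadj).resolve_right ?_
    have := x.2.isLt
    omega

lemma copsCatch_sweep_pocket (hh : 4 ≤ h) (hm : m + 3 ≤ l) {q : ℕ}
    {v b : Fin h × Fin l} (hv : (v.1 : ℕ) % 2 = P) (hgv : sweepFront m P i v.1 = m)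
    (hv2 : (v.2 : ℕ) = m + 1) (hb1 : b.1 = v.1) (hb2 : (b.2 : ℕ) = m + 2) :
    CopsCatch (gridGraph h l) (h + 1) (q + 1)
      (insert (Sum.inl b) (barrier h l (h + 1) (sweepFront m P i))) v := by
  have hbB : Sum.inl b ∉ barrier h l (h + 1) (sweepFront m P i) := by
    rw [inl_mem_barrier, hb1, hgv]
    omega
  -- a cop two rows away from the robber is not needed to hold the pocket
  set r : ℕ := if (v.1 : ℕ) < 2 then v.1 + 2 else v.1 - 2 with hr
  have hrh : r < h := by split_ifs at hr <;> omega
  have hrv : r + 2 = v.1 ∨ (v.1 : ℕ) + 2 = r := by split_ifs at hr <;> omega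
  set z : Fin h × Fin l := (⟨r, hrh⟩, ⟨sweepFront m P i r, (sweepFront_le r).trans_lt (by omega)⟩)
  refine copsCatch_succ_of_forall_adj_mem (z := Sum.inl z) ?_ ?_ ?_ ?_
  · rw [Finset.card_insert_of_notMem hbB, card_barrier_sweepFront hm]
  · exact Finset.mem_insert_of_mem (by simp [z])
  · rw [Finset.mem_insert]
    rintro (hvb | hvB)
    · have : (v.2 : ℕ) = b.2 := by rw [Sum.inl_injective hvb]
      omega
    · rw [inl_mem_barrier, hgv] at hvB
      omega
  · intro x hadj
    have hxz : x.1 ≠ z.1 := fun hxz => by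
      have := congrArg Fin.val hxz
      rcases gridGraph_adj.1 hadj with ⟨h1, -⟩ | ⟨-, h1 | h1⟩ <;> simp only [z] at this <;> omega
    refine Finset.mem_erase.2 ⟨fun hx => hxz (by rw [Sum.inl_injective hx]), ?_⟩
    rcases mem_barrier_sweepFront_of_adj hv hgv hv2 hadj with hxB | ⟨hx1, hx2⟩
    · exact Finset.mem_insert_of_mem hxB
    · exact Finset.mem_insert.2 (Or.inl (congrArg Sum.inl (Prod.ext (hx1.trans hb1.symm)
        (Fin.ext (hx2.trans hb2.symm)))))

lemma copsCatch_sweep_step (hh : 4 ≤ h) (hP : P ≤ 1) (hm : m + 3 ≤ l) {q : ℕ}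
    {c : Fin h × Fin l} (hc1 : (c.1 : ℕ) = P + 2 * i) (hc2 : (c.2 : ℕ) = m)
    {e : (Fin h × Fin l) ⊕ Fin (h + 1)}
    (he : ∀ p, e = Sum.inl p → (p.2 : ℕ) < sweepFront m P i p.1)
    {v : Fin h × Fin l} (hv : sweepFront m P i v.1 < v.2)
    (hnext : ∀ u : Fin h × Fin l, sweepFront m P (i + 1) u.1 < u.2 →
      CopsCatch (gridGraph h l) (h + 1) (q + 1)
        (insert (Sum.inl c) (barrier h l (h + 1) (sweepFront m P (i + 1)))) u) :
    CopsCatch (gridGraph h l) (h + 1) (q + 2)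
      (insert e (barrier h l (h + 1) (sweepFront m P i))) v := by
  have heB := notMem_barrier_of_forall_lt he
  have hgc : sweepFront m P i c.1 = m := by unfold sweepFront; split_ifs <;> omega
  set b : Fin h × Fin l := (c.1, ⟨m + 2, by omega⟩)
  have hbX : Sum.inl b ∉ insert e (barrier h l (h + 1) (sweepFront m P i)) := by
    rw [Finset.mem_insert, inl_mem_barrier, not_or]
    refine ⟨fun hbe => ?_, by simp [b, hgc]⟩
    have := he b hbe.symm
    simp only [b, hgc] at this
    omega
  -- the cop on `c` is relieved by the spare cop moving to `b`, two columns ahead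
  have hrelieve : insert (Sum.inl b) (barrier h l (h + 1) (sweepFront m P i)) =
      insert (Sum.inl c) (barrier h l (h + 1) (sweepFront m P (i + 1))) := by
    ext (p | j)
    · simp only [Finset.mem_insert, Sum.inl.injEq, inl_mem_barrier, Prod.ext_iff, Fin.ext_iff,
        b, sweepFront]
      split_ifs <;> omega
    · simp
  refine copsCatch_succ_of_move (by rw [Finset.card_insert_of_notMem heB,
    card_barrier_sweepFront hm]) (Finset.mem_insert_self e _) hbX fun u hu hnot => ?_
  rw [Finset.erase_insert heB] at hu hnot ⊢
  have hside := (hu.lt_iff_lt_of_zigzag (fun r _ => sweepFront_zigzag hP r) subset_rfl).1 hv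
  by_cases hpocket : u = (c.1, ⟨m + 1, by omega⟩)
  · rw [hpocket]
    exact copsCatch_sweep_pocket hh hm (by dsimp only; omega) hgc rfl rfl rfl
  · rw [hrelieve]
    refine hnext u ?_
    simp only [Finset.mem_insert, Sum.inl.injEq, inl_mem_barrier, Prod.ext_iff, Fin.ext_iff,
      b, not_or] at hnot hpocket
    unfold sweepFront at hside hgc ⊢
    split_ifs at hside hgc ⊢ <;> omega

theorem copsCatch_sweep (hh : 4 ≤ h) {q : ℕ} (hP : P ≤ 1)
    (hstate : i = 0 ∧ m + 2 = l ∨ i < rowCount h P ∧ m + 3 ≤ l)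
    (hq : sweepRounds h (l - 2 - m) P + 1 ≤ q + i)
    {e : (Fin h × Fin l) ⊕ Fin (h + 1)}
    (he : ∀ p, e = Sum.inl p → (p.2 : ℕ) < sweepFront m P i p.1)
    {v : Fin h × Fin l} (hv : sweepFront m P i v.1 < v.2) :
    CopsCatch (gridGraph h l) (h + 1) q (insert e (barrier h l (h + 1) (sweepFront m P i))) v := by
  induction q generalizing m P i e v with
  | zero =>
    rcases hstate with ⟨rfl, -⟩ | ⟨hi, hm⟩
    · omega
    · have := rowCount_le_sweepRounds (h := h) (P := P) (show 1 ≤ l - 2 - m by omega)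
      omega
  | succ q ih =>
    rcases hstate with ⟨rfl, hl⟩ | ⟨hi, hm⟩
    · exact copsCatch_sweep_last hl he hv
    have hcount := rowCount_le_sweepRounds (h := h) (P := P) (show 1 ≤ l - 2 - m by omega)
    obtain ⟨q, rfl⟩ : ∃ q', q = q' + 1 := ⟨q - 1, by omega⟩
    have hr : P + 2 * i < h := by unfold rowCount at hi; omega
    refine copsCatch_sweep_step hh hP hm (c := (⟨P + 2 * i, hr⟩, ⟨m, by omega⟩)) rfl rfl he hv
      fun u hu => ?_
    have hc : m < sweepFront m P (i + 1) (P + 2 * i) := by unfold sweepFront; split_ifs <;> omega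
    rcases (show i + 1 < rowCount h P ∨ i + 1 = rowCount h P by omega) with hi' | hi'
    · exact ih hP (Or.inr ⟨hi', hm⟩) (by omega) (fun p hp => Sum.inl_injective hp ▸ hc) hu
    · rw [hi', sweepFront_rowCount hP u.1 u.1.isLt] at hu
      rw [hi', sweepFront_rowCount hP _ hr] at hc
      rw [hi', barrier_congr (sweepFront_rowCount hP)]
      have hrounds : sweepRounds h (l - 2 - m) P =
          rowCount h P + sweepRounds h (l - 2 - (m + 1)) (1 - P) := by
        rw [show l - 2 - m = l - 2 - (m + 1) + 1 by omega, sweepRounds]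
      refine ih (by omega) ?_ (by omega) (fun p hp => Sum.inl_injective hp ▸ hc) hu
      by_cases hl : m + 1 + 2 = l
      · exact Or.inl ⟨rfl, hl⟩
      · exact Or.inr ⟨by unfold rowCount; omega, by omega⟩

end Sweep

section Deploy

variable {V : Type*} [DecidableEq V] {G : SimpleGraph V} {k n : ℕ}

def deployPos (k : ℕ) (c : Fin n → V) (t : ℕ) : Finset (V ⊕ Fin k) :=
  (Finset.univ.filter fun j : Fin n => (j : ℕ) < t).image (Sum.inl ∘ c) ∪
    (Finset.univ.filter fun j : Fin k => t ≤ (j : ℕ)).image Sum.inr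

lemma deployPos_zero (c : Fin n → V) : deployPos k c 0 = initPos V k := by
  ext (p | j) <;> simp [deployPos, initPos]

lemma deployPos_succ (c : Fin n → V) {t : ℕ} (ht : t < n) (hn : n ≤ k) :
    deployPos k c (t + 1) =
      insert (Sum.inl (c ⟨t, ht⟩)) ((deployPos k c t).erase (Sum.inr ⟨t, by omega⟩)) := by
  ext (p | j)
  · simp only [deployPos, Finset.mem_insert, Finset.mem_erase, Finset.mem_union,
      Finset.mem_image, Finset.mem_filter, Finset.mem_univ, true_and, Function.comp_apply,
      Sum.inl.injEq, ne_eq, reduceCtorEq, not_false_eq_true, and_false,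
      exists_false, or_false]
    constructor
    · rintro ⟨j, hj, rfl⟩
      rcases Nat.lt_succ_iff_lt_or_eq.1 hj with hj | hj
      · exact Or.inr ⟨j, hj, rfl⟩
      · exact Or.inl (congrArg c (Fin.ext hj))
    · rintro (rfl | ⟨j, hj, rfl⟩)
      · exact ⟨_, Nat.lt_succ_self t, rfl⟩
      · exact ⟨j, Nat.lt_succ_of_lt hj, rfl⟩
  · simp only [deployPos, Finset.mem_insert, Finset.mem_erase, Finset.mem_union,
      Finset.mem_image, Finset.mem_filter, Finset.mem_univ, true_and, Sum.inr.injEq,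
      exists_eq_right, Function.comp_apply, reduceCtorEq, and_false, exists_false, false_or,
      ne_eq]
    simp only [Fin.ext_iff]
    omega

lemma inr_mem_deployPos (c : Fin n → V) {t : ℕ} (ht : t < k) :
    Sum.inr ⟨t, ht⟩ ∈ deployPos k c t := by
  simp [deployPos]

lemma inl_notMem_deployPos {c : Fin n → V} (hc : Function.Injective c) {t : ℕ} (ht : t < n) :
    Sum.inl (c ⟨t, ht⟩) ∉ deployPos k c t := by
  simp only [deployPos, Finset.mem_union, Finset.mem_image, Finset.mem_filter, Finset.mem_univ,
    true_and, Function.comp_apply, Sum.inl.injEq, hc.eq_iff, reduceCtorEq, and_false,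
    exists_false, or_false, not_exists, not_and]
  rintro j hj rfl
  exact lt_irrefl _ hj

lemma card_deployPos_succ {c : Fin n → V} (hc : Function.Injective c) {t : ℕ} (ht : t < n)
    (hn : n ≤ k) : (deployPos k c (t + 1)).card = (deployPos k c t).card := by
  rw [deployPos_succ c ht hn]
  exact Finset.card_insert_erase_of_mem_of_notMem (inr_mem_deployPos c _)
    (inl_notMem_deployPos hc ht)

theorem copsWinGame_of_deploy {c : Fin n → V} (hc : Function.Injective c) (hn : n ≤ k)
    {q : ℕ} (hlast : ∀ v, Sum.inl v ∉ deployPos k c n → CopsCatch G k q (deployPos k c n) v) :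
    CopsWinGame G k (q + n) := by
  suffices hdeploy : ∀ s t, t + s = n → (deployPos k c t).card = k →
      ∀ v, Sum.inl v ∉ deployPos k c t → CopsCatch G k (q + s) (deployPos k c t) v by
    intro v
    rw [← deployPos_zero c]
    refine hdeploy n 0 (zero_add n) ?_ v (by simp [deployPos])
    rw [deployPos_zero, initPos, Finset.card_image_of_injective _ Sum.inr_injective]
    simp
  intro s
  induction s with
  | zero =>
    rintro t rfl -
    exact hlast
  | succ s ih =>
    intro t hts hcard v _
    have ht : t < n := by omega
    refine copsCatch_succ_of_move hcard (inr_mem_deployPos c (by omega))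
      (inl_notMem_deployPos hc ht) fun u _ hu => ?_
    rw [← deployPos_succ c ht hn] at hu ⊢
    exact ih (t + 1) (by omega) (by rw [card_deployPos_succ hc ht hn, hcard]) u hu

end Deploy

section Zigzag

variable {h l m : ℕ}

def zigzagCell (hm : m + 2 ≤ l) (r : Fin h) : Fin h × Fin l :=
  (r, ⟨sweepFront m 0 0 r, by unfold sweepFront; split_ifs <;> omega⟩)

lemma zigzagCell_injective (hm : m + 2 ≤ l) : Function.Injective (zigzagCell (h := h) hm) :=
  fun _ _ hrr' => congrArg Prod.fst hrr'

lemma deployPos_zigzagCell (hm : m + 2 ≤ l) :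
    deployPos (h + 1) (zigzagCell hm) h =
      insert (Sum.inr (Fin.last h)) (barrier h l (h + 1) (sweepFront m 0 0)) := by
  ext (p | j)
  · simp only [deployPos, zigzagCell, Finset.mem_insert, Finset.mem_union, Finset.mem_image,
      Finset.mem_filter, Finset.mem_univ, true_and, Function.comp_apply, Sum.inl.injEq,
      reduceCtorEq, and_false, exists_false, or_false, false_or, inl_mem_barrier]
    constructor
    · rintro ⟨r, -, rfl⟩
      rfl
    · exact fun hp => ⟨p.1, p.1.isLt, Prod.ext rfl (Fin.ext hp.symm)⟩
  · have := j.isLt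
    simp only [deployPos, Finset.mem_insert, Finset.mem_union, Finset.mem_image,
      Finset.mem_filter, Finset.mem_univ, true_and, Function.comp_apply, reduceCtorEq,
      and_false, exists_false, false_or, Sum.inr.injEq, exists_eq_right, inr_notMem_barrier,
      or_false]
    rw [Fin.ext_iff, Fin.val_last]
    omega

theorem copsCatch_zigzag (hh : 4 ≤ h) (hm : 1 ≤ m) (hml : m + 3 ≤ l) {q : ℕ}
    (hqR : sweepRounds h (l - 2 - m) 0 + 1 ≤ q) (hqL : sweepRounds h m 1 + 1 ≤ q)
    {v : Fin h × Fin l}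
    (hv : Sum.inl v ∉ insert (Sum.inr (Fin.last h)) (barrier h l (h + 1) (sweepFront m 0 0))) :
    CopsCatch (gridGraph h l) (h + 1) q
      (insert (Sum.inr (Fin.last h)) (barrier h l (h + 1) (sweepFront m 0 0))) v := by
  have hvB : (v.2 : ℕ) ≠ sweepFront m 0 0 v.1 := fun hvB =>
    hv (Finset.mem_insert_of_mem (inl_mem_barrier.2 hvB))
  rcases Nat.lt_or_gt_of_ne hvB with hleft | hright
  · -- a robber left of the zigzag is swept in the mirror image of the grid
    have hmirror : ∀ r < h, sweepFront (l - 2 - m) 1 0 r + sweepFront m 0 0 r + 1 = l := by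
      intro r _
      unfold sweepFront
      split_ifs <;> omega
    have hcatch := (copsCatch_sweep hh (m := l - 2 - m) (i := 0) (q := q)
      (e := Sum.inr (Fin.last h)) (v := gridMirror h l v) le_rfl (Or.inr ⟨by unfold rowCount; omega, by omega⟩)
      (by rw [show l - 2 - (l - 2 - m) = m by omega]; omega) (by simp) ?_).map (gridMirror h l)
    · rw [Finset.map_insert, barrier_map_gridMirror hmirror, gridMirror_gridMirror] at hcatch
      exact hcatch
    · have := hmirror v.1 v.1.isLt
      simp only [gridMirror, RelIso.coe_fn_mk, Equiv.prodCongr_apply, Equiv.coe_refl,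
        Prod.map_fst, Prod.map_snd, id_eq, Fin.revPerm_apply, Fin.val_rev]
      omega
  · exact copsCatch_sweep hh zero_le_one (Or.inr ⟨by unfold rowCount; omega, hml⟩) hqR (by simp)
      hright

lemma sweepRounds_add_one_le {N P q : ℕ} (hh : 2 ≤ h) (hP : P ≤ 1) (hN : 2 * N < l)
    (hq : l * h + 4 ≤ 4 * q) : sweepRounds h N P + 1 ≤ q := by
  have hrounds := two_mul_sweepRounds_le (h := h) hP N
  have hlh : 2 * (N * h) + h ≤ l * h := by
    calc 2 * (N * h) + h = (2 * N + 1) * h := by ring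
      _ ≤ l * h := Nat.mul_le_mul_right h hN
  omega

end Zigzag

/-- For `3 < h < ℓ−3` and `q ≥ ℓh/4 + h + 1`, Cops wins the `q`-round
`(h+1)`-cops-and-robber game on the `h × ℓ` grid. -/
theorem cops_win_grid (h l q : ℕ) (h1 : 3 < h) (h2 : h < l - 3)
    (hq : l * h + 4 * h + 4 ≤ 4 * q) :
    CopsWinGame (gridGraph h l) (h + 1) q := by
  obtain ⟨q, rfl⟩ : ∃ q', q = q' + h := ⟨q - h, by omega⟩
  have hm : (l - 2) / 2 + 2 ≤ l := by omega
  refine copsWinGame_of_deploy (zigzagCell_injective hm) (Nat.le_succ h) fun v hv => ?_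
  rw [deployPos_zigzagCell] at hv ⊢
  have hq' : l * h + 4 ≤ 4 * q := by omega
  exact copsCatch_zigzag (by omega) (by omega) (by omega)
    (sweepRounds_add_one_le (by omega) zero_le_one (by omega) hq')
    (sweepRounds_add_one_le (by omega) le_rfl (by omega) hq') hv
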